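/- arXiv:1804.00130 — 4 statements merged into one kernel-verified Lean document; each statement's English description precedes it below -/
import Mathlib

section
/- Suppose A satisfies the restricted orthogonality property bound: |⟨Ax, Ax'⟩| ≤ θ‖x‖‖x'‖ for all disjointly supported x with ‖x‖₀ ≤ s and x' with ‖x'‖₀ ≤ s'. Then for any positive integer a, and any disjointly supported x with ‖x‖₀ ≤ s and z with ‖z‖₀ ≤ a·s', one has |⟨Ax, Az⟩| ≤ √a · θ ‖x‖‖z‖. That is, θ_{s,as'} ≤ √a · θ_{s,s'}. -/
/-!
Split a vector `z` with at most `(a + 1) s'` nonzero entries as `z = z₁ + z₂`, where `z₁` keeps at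
most `s'` of them and `z₂` the remaining at most `a s'`. By the hypothesis for `z₁` and induction
for `z₂`, `|⟨Ax, Az⟩| ≤ θ‖x‖ (‖z₁‖ + √a ‖z₂‖)`, and since `‖z₁‖² + ‖z₂‖² = ‖z‖²`, Cauchy–Schwarz in
`ℝ²` bounds `‖z₁‖ + √a ‖z₂‖` by `√(a + 1) ‖z‖`. The factor `θ‖x‖` is nonnegative because the
hypothesis applies to a unit coordinate vector off the support of `x`.
-/

open Finset

/-- ℓ2 norm of a vector. -/
noncomputable def l2 {n : ℕ} (v : Fin n → ℝ) : ℝ := Real.sqrt (∑ i, v i ^ 2)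

/-- ℓ1 norm of a vector. -/
noncomputable def l1 {n : ℕ} (v : Fin n → ℝ) : ℝ := ∑ i, |v i|

/-- number of nonzero entries (ℓ0 "norm"). -/
noncomputable def spars {n : ℕ} (v : Fin n → ℝ) : ℕ := Set.ncard {i | v i ≠ 0}

/-- restriction of a vector to an index set (zero off the set). -/
def restr {n : ℕ} (S : Finset (Fin n)) (v : Fin n → ℝ) : Fin n → ℝ :=
  fun i => if i ∈ S then v i else 0

lemma add_sqrt_mul_le_sqrt_add_one_mul {a p q r : ℝ} (ha : 0 ≤ a)
    (hr : 0 ≤ r) (hpqr : p ^ 2 + q ^ 2 = r ^ 2) : p + √a * q ≤ √(a + 1) * r := by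
  apply abs_le_of_sq_le_sq' _ (by positivity) |>.2
  rw [mul_pow, Real.sq_sqrt (by linarith), ← hpqr]
  nlinarith [sq_nonneg (√a * p - q), Real.sq_sqrt ha]

section Sparse

variable {n : ℕ} (f : (Fin n → ℝ) →+ ℝ) {x : Fin n → ℝ} {s' : ℕ} {c : ℝ}

lemma l2_sq (v : Fin n → ℝ) : l2 v ^ 2 = ∑ i, v i ^ 2 :=
  Real.sq_sqrt (by positivity)

lemma l2_single (i : Fin n) : l2 (Pi.single i 1) = 1 := by
  simp [l2, Pi.single_apply]

lemma spars_eq_card_filter (v : Fin n → ℝ) : spars v = #{i | v i ≠ 0} := by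
  rw [spars, ← Set.ncard_coe_finset]
  simp

lemma spars_eq_zero_iff {v : Fin n → ℝ} : spars v = 0 ↔ v = 0 := by
  simp [spars_eq_card_filter, filter_eq_empty_iff, funext_iff]

lemma spars_single (i : Fin n) : spars (Pi.single i (1 : ℝ)) = 1 := by
  rw [spars_eq_card_filter, card_eq_one]
  exact ⟨i, by ext j; simp [Pi.single_apply]⟩

lemma spars_restr (S : Finset (Fin n)) (v : Fin n → ℝ) :
    spars (restr S v) = #{i ∈ S | v i ≠ 0} := by
  rw [spars_eq_card_filter]
  congr 1
  ext i
  simp [restr]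

lemma restr_add_restr_compl (S : Finset (Fin n)) (v : Fin n → ℝ) :
    restr S v + restr Sᶜ v = v := by
  ext i
  by_cases hi : i ∈ S <;> simp [restr, hi]

lemma l2_restr_sq_add_l2_restr_compl_sq (S : Finset (Fin n)) (v : Fin n → ℝ) :
    l2 (restr S v) ^ 2 + l2 (restr Sᶜ v) ^ 2 = l2 v ^ 2 := by
  simp only [l2_sq, ← sum_add_distrib]
  refine sum_congr rfl fun i _ => ?_
  by_cases hi : i ∈ S <;> simp [restr, hi]

lemma exists_spars_restr_le_and_spars_restr_compl_le {v : Fin n → ℝ} {k m : ℕ}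
    (hv : spars v ≤ k + m) : ∃ S, spars (restr S v) ≤ k ∧ spars (restr Sᶜ v) ≤ m := by
  set T : Finset (Fin n) := {i | v i ≠ 0}
  obtain ⟨S, hST, hS⟩ := exists_subset_card_eq (min_le_left #T k)
  have hT : #T ≤ k + m := spars_eq_card_filter v ▸ hv
  have hS_filter : {i ∈ S | v i ≠ 0} = S :=
    filter_true_of_mem fun i hi => (mem_filter.mp (hST hi)).2
  have hSc_filter : {i ∈ Sᶜ | v i ≠ 0} = T \ S := by ext i; simp [T, and_comm]
  refine ⟨S, ?_, ?_⟩
  · rw [spars_restr, hS_filter, hS]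
    exact min_le_right _ _
  · rw [spars_restr, hSc_filter, card_sdiff_of_subset hST, hS]
    omega

lemma nonneg_of_abs_le_mul_l2
    (hf : ∀ z, (∀ i, x i = 0 ∨ z i = 0) → spars z ≤ s' → |f z| ≤ c * l2 z)
    {i : Fin n} (hxi : x i = 0) (hs' : 1 ≤ s') : 0 ≤ c := by
  have hdisj : ∀ j, x j = 0 ∨ (Pi.single i 1 : Fin n → ℝ) j = 0 := fun j => by
    rcases eq_or_ne j i with rfl | hj
    · exact .inl hxi
    · exact .inr (Pi.single_eq_of_ne hj _)
  have := hf _ hdisj ((spars_single i).trans_le hs')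
  rw [l2_single, mul_one] at this
  exact (abs_nonneg _).trans this

lemma abs_le_sqrt_mul_mul_l2 (hc : 0 ≤ c)
    (hf : ∀ z, (∀ i, x i = 0 ∨ z i = 0) → spars z ≤ s' → |f z| ≤ c * l2 z) (a : ℕ) {z : Fin n → ℝ}
    (hdisj : ∀ i, x i = 0 ∨ z i = 0) (hz : spars z ≤ a * s') : |f z| ≤ √a * c * l2 z := by
  induction a generalizing z with
  | zero =>
    rw [zero_mul, Nat.le_zero, spars_eq_zero_iff] at hz
    simp [hz]
  | succ a ih =>
    have hz' : spars z ≤ s' + a * s' := hz.trans_eq (by ring)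
    obtain ⟨S, hS, hSc⟩ := exists_spars_restr_le_and_spars_restr_compl_le hz'
    have hdisj_restr : ∀ T : Finset (Fin n), ∀ i, x i = 0 ∨ restr T z i = 0 := fun T i =>
      (hdisj i).imp_right fun h => by simp [restr, h]
    have hkey := add_sqrt_mul_le_sqrt_add_one_mul (Nat.cast_nonneg a) (Real.sqrt_nonneg _)
      (l2_restr_sq_add_l2_restr_compl_sq S z)
    calc |f z| = |f (restr S z) + f (restr Sᶜ z)| := by rw [← map_add, restr_add_restr_compl]
      _ ≤ |f (restr S z)| + |f (restr Sᶜ z)| := abs_add_le _ _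
      _ ≤ c * l2 (restr S z) + √a * c * l2 (restr Sᶜ z) :=
        add_le_add (hf _ (hdisj_restr S) hS) (ih (hdisj_restr Sᶜ) hSc)
      _ = c * (l2 (restr S z) + √a * l2 (restr Sᶜ z)) := by ring
      _ ≤ c * (√(a + 1) * l2 z) := mul_le_mul_of_nonneg_left hkey hc
      _ = √↑(a + 1) * c * l2 z := by push_cast; ring

end Sparse

theorem stmt1_general {M N : ℕ} (A : Matrix (Fin M) (Fin N) ℝ) (s s' : ℕ) (θ : ℝ)
    (hROC : ∀ x x' : Fin N → ℝ, (∀ i, x i = 0 ∨ x' i = 0) →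
      spars x ≤ s → spars x' ≤ s' →
      |∑ j, A.mulVec x j * A.mulVec x' j| ≤ θ * l2 x * l2 x')
    (a : ℕ)
    (x z : Fin N → ℝ) (hdisj : ∀ i, x i = 0 ∨ z i = 0)
    (hx : spars x ≤ s) (hz : spars z ≤ a * s') :
    |∑ j, A.mulVec x j * A.mulVec z j| ≤ Real.sqrt a * θ * l2 x * l2 z := by
  let f : (Fin N → ℝ) →+ ℝ := AddMonoidHom.mk' (fun z => ∑ j, A.mulVec x j * A.mulVec z j)
    fun u v => by simp only [Matrix.mulVec_add, Pi.add_apply, mul_add, sum_add_distrib]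
  have hf (z' : Fin N → ℝ) (hd : ∀ i, x i = 0 ∨ z' i = 0) (hz' : spars z' ≤ s') :
      |f z'| ≤ θ * l2 x * l2 z' :=
    hROC x z' hd hx hz'
  rcases eq_or_ne z 0 with rfl | hz0
  · simp [l2]
  obtain ⟨i, hzi⟩ := Function.ne_iff.mp hz0
  have hs' : 1 ≤ s' := by
    by_contra! h
    rw [Nat.lt_one_iff.mp h, mul_zero, Nat.le_zero, spars_eq_zero_iff] at hz
    exact hz0 hz
  have hc := nonneg_of_abs_le_mul_l2 f hf ((hdisj i).resolve_right hzi) hs'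
  exact (abs_le_sqrt_mul_mul_l2 f hc hf a hdisj hz).trans_eq (by ring)

/-- θ_{s,as'} ≤ √a · θ_{s,s'}. -/
theorem stmt1 {M N : ℕ} (A : Matrix (Fin M) (Fin N) ℝ) (s s' : ℕ) (θ : ℝ)
    (hROC : ∀ x x' : Fin N → ℝ, (∀ i, x i = 0 ∨ x' i = 0) →
      spars x ≤ s → spars x' ≤ s' →
      |∑ j, A.mulVec x j * A.mulVec x' j| ≤ θ * l2 x * l2 x')
    (a : ℕ) (ha : 1 ≤ a) (hsize : s + a * s' ≤ N)
    (x z : Fin N → ℝ) (hdisj : ∀ i, x i = 0 ∨ z i = 0)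
    (hx : spars x ≤ s) (hz : spars z ≤ a * s') :
    |∑ j, A.mulVec x j * A.mulVec z j| ≤ Real.sqrt a * θ * l2 x * l2 z :=
  stmt1_general A s s' θ hROC a x z hdisj hx hz
end

section
/- Let x, z ∈ ℝ^N with ‖x‖₀ = s₁, ‖z‖₀ = s₂ and s₂ ≥ s₁. Let S₁ be the support of x, S₂ the support of z, and let S∇ ⊆ S₂ be the set of indices of the s₂ - s₁ smallest-magnitude entries of z (within S₂). Then ‖x_{S∇}‖₁ ≤ ‖(x - z)_{S₂}‖₁ ≤ ‖x - z‖₁. -/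
/-!
Since `|S∇| + |S₁| ≤ |S₂|`, the indices of `S∇` on which `x` lives are no more numerous than
the indices of `S₂ \ S∇` on which `x` vanishes, and by the choice of `S∇` they carry no more
`|z|`-mass. On `S∇ ∩ S₁` we bound `|x| ≤ |x - z| + |z|`, and on `(S₂ \ S∇) \ S₁` we have
`|z| = |x - z|`; these two disjoint pieces of `S₂` give `‖x_{S∇}‖₁ ≤ ‖(x - z)_{S₂}‖₁`.
-/

open Finset

namespace Finset

variable {ι α : Type*}

theorem card_inter_le_card_sdiff_of_disjoint [DecidableEq ι] {V U S : Finset ι}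
    (hVU : Disjoint V U) (hS : #S ≤ #U) : #(V ∩ S) ≤ #(U \ S) := by
  have hsplit : #(V ∩ S) + #(U ∩ S) ≤ #S := by
    rw [← card_union_of_disjoint (hVU.mono inter_subset_left inter_subset_left)]
    exact card_le_card (union_subset inter_subset_right inter_subset_right)
  have := card_sdiff_add_card_inter U S
  omega

theorem sum_le_sum_of_card_le_of_forall_le [AddCommMonoid α] [LinearOrder α]
    [IsOrderedAddMonoid α] {A T : Finset ι} (f : ι → α) (hcard : #A ≤ #T)
    (hle : ∀ i ∈ A, ∀ j ∈ T, f i ≤ f j) (hnonneg : ∀ j ∈ T, 0 ≤ f j) :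
    ∑ i ∈ A, f i ≤ ∑ j ∈ T, f j := by
  rcases T.eq_empty_or_nonempty with rfl | hT
  · simp [card_eq_zero.mp (Nat.le_zero.mp hcard)]
  obtain ⟨j₀, hj₀, hmin⟩ := T.exists_min_image f hT
  calc ∑ i ∈ A, f i ≤ #A • f j₀ := sum_le_card_nsmul A f _ fun i hi => hle i hi j₀ hj₀
    _ ≤ #T • f j₀ := nsmul_le_nsmul_left (hnonneg j₀ hj₀) hcard
    _ ≤ ∑ j ∈ T, f j := card_nsmul_le_sum T f _ hmin

end Finset

section SmallestEntries

variable {ι α : Type*} [DecidableEq ι] [AddCommGroup α] [LinearOrder α] [IsOrderedAddMonoid α]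

theorem sum_abs_le_sum_abs_sub_add_sum_abs_inter (x z : ι → α) {S₁ S : Finset ι}
    (hx : ∀ i ∉ S₁, x i = 0) :
    ∑ i ∈ S, |x i| ≤ ∑ i ∈ S, |x i - z i| + ∑ i ∈ S ∩ S₁, |z i| := by
  rw [← filter_mem_eq_inter, sum_filter, ← sum_add_distrib]
  refine sum_le_sum fun i _ => ?_
  split_ifs with hi
  · simpa using abs_add_le (x i - z i) (z i)
  · simp [hx i hi]

theorem sum_abs_le_sum_abs_sub_of_forall_abs_le (x z : ι → α) {S₁ S₂ Snab : Finset ι}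
    (hx : ∀ i ∉ S₁, x i = 0) (hsub : Snab ⊆ S₂) (hcard : #Snab + #S₁ ≤ #S₂)
    (hsmall : ∀ i ∈ Snab, ∀ j ∈ S₂ \ Snab, |z i| ≤ |z j|) :
    ∑ i ∈ Snab, |x i| ≤ ∑ i ∈ S₂, |x i - z i| := by
  have hcount : #(Snab ∩ S₁) ≤ #((S₂ \ Snab) \ S₁) :=
    card_inter_le_card_sdiff_of_disjoint disjoint_sdiff
      (by rw [card_sdiff_of_subset hsub]; omega)
  have hmass : ∑ i ∈ Snab ∩ S₁, |z i| ≤ ∑ j ∈ (S₂ \ Snab) \ S₁, |x j - z j| := by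
    calc ∑ i ∈ Snab ∩ S₁, |z i| ≤ ∑ j ∈ (S₂ \ Snab) \ S₁, |z j| :=
          sum_le_sum_of_card_le_of_forall_le _ hcount
            (fun i hi j hj => hsmall i (mem_inter.mp hi).1 j (mem_sdiff.mp hj).1)
            (fun _ _ => abs_nonneg _)
      _ = ∑ j ∈ (S₂ \ Snab) \ S₁, |x j - z j| :=
          sum_congr rfl fun j hj => by simp [hx j (mem_sdiff.mp hj).2]
  have hrest : ∑ j ∈ (S₂ \ Snab) \ S₁, |x j - z j| ≤ ∑ j ∈ S₂ \ Snab, |x j - z j| :=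
    sum_le_sum_of_subset_of_nonneg sdiff_subset fun _ _ _ => abs_nonneg _
  calc ∑ i ∈ Snab, |x i| ≤ ∑ i ∈ Snab, |x i - z i| + ∑ i ∈ Snab ∩ S₁, |z i| :=
        sum_abs_le_sum_abs_sub_add_sum_abs_inter x z hx
    _ ≤ ∑ i ∈ Snab, |x i - z i| + ∑ j ∈ S₂ \ Snab, |x j - z j| := by
        gcongr
        exact hmass.trans hrest
    _ = ∑ i ∈ S₂, |x i - z i| := by rw [add_comm, sum_sdiff hsub]

end SmallestEntries

section Vectors

variable {n : ℕ}

theorem l1_restr (S : Finset (Fin n)) (v : Fin n → ℝ) :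
    l1 (restr S v) = ∑ i ∈ S, |v i| := by
  simp only [l1, restr, apply_ite abs, abs_zero, sum_ite_mem, univ_inter]

theorem l1_restr_le (S : Finset (Fin n)) (v : Fin n → ℝ) : l1 (restr S v) ≤ l1 v := by
  rw [l1_restr]
  exact sum_le_sum_of_subset_of_nonneg (subset_univ S) fun _ _ _ => abs_nonneg _

theorem spars_eq_card {v : Fin n → ℝ} {S : Finset (Fin n)} (hS : ∀ i, i ∈ S ↔ v i ≠ 0) :
    spars v = #S := by
  rw [spars, ← Set.ncard_coe_finset]
  congr 1
  ext i
  simp [hS i]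

end Vectors

/-- ‖x_{S∇}‖₁ ≤ ‖(x-z)_{S₂}‖₁ ≤ ‖x-z‖₁. -/
theorem stmt6 {N : ℕ} (x z : Fin N → ℝ) (s₁ s₂ : ℕ)
    (hx : spars x = s₁) (hz : spars z = s₂) (hs : s₁ ≤ s₂)
    (S₂ : Finset (Fin N)) (hS₂ : ∀ i, i ∈ S₂ ↔ z i ≠ 0)
    (Snab : Finset (Fin N)) (hsub : Snab ⊆ S₂) (hcard : Snab.card = s₂ - s₁)
    (hsmall : ∀ i ∈ Snab, ∀ j ∈ S₂ \ Snab, |z i| ≤ |z j|) :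
    l1 (restr Snab x) ≤ l1 (restr S₂ (x - z)) ∧ l1 (restr S₂ (x - z)) ≤ l1 (x - z) := by
  refine ⟨?_, l1_restr_le S₂ (x - z)⟩
  set S₁ := univ.filter fun i => x i ≠ 0
  have hS₁ : #S₁ = s₁ := hx ▸ (spars_eq_card (by simp [S₁])).symm
  have hS₂card : #S₂ = s₂ := hz ▸ (spars_eq_card hS₂).symm
  rw [l1_restr, l1_restr]
  exact sum_abs_le_sum_abs_sub_of_forall_abs_le x z (S₁ := S₁) (by simp [S₁]) hsub
    (by omega) hsmall
end

section
/- Let x, x̂ ∈ ℝ^N, let T₀ be a set of s indices, set z = x̂ - x, and suppose that for some λ with 1/2 < λ ≤ 1 and some vector w, λ‖x̂‖₁ + (1-λ)‖x̂ - w‖₁ ≤ λ‖x‖₁ + (1-λ)‖x - w‖₁. Then ‖z_{T₀^c}‖₁ ≤ (1/(2λ-1))‖z_{T₀}‖₁ + (2λ/(2λ-1))‖x_{T₀^c}‖₁. -/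
/-
Write `a = ‖z_{T₀}‖₁`, `b = ‖z_{T₀ᶜ}‖₁`, `c = ‖x_{T₀ᶜ}‖₁`. Coordinatewise reverse triangle
inequalities give `‖x̂‖₁ - ‖x‖₁ ≥ b - a - 2c` (on `T₀` a coordinate of `x̂ = x + z` loses at most
`|zᵢ|`, off `T₀` it gains at least `|zᵢ| - 2|xᵢ|`), while `‖x - w‖₁ - ‖x̂ - w‖₁ ≤ ‖z‖₁ = a + b`.
The hypothesis therefore yields `λ (b - a - 2c) ≤ (1 - λ)(a + b)`, i.e. `(2λ - 1) b ≤ a + 2λ c`.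
-/

open Finset

section L1

variable {n : ℕ}

lemma l1_sub_comm (u v : Fin n → ℝ) : l1 (u - v) = l1 (v - u) := by
  simp only [l1, Pi.sub_apply, abs_sub_comm]

lemma l1_sub_l1_le (u v : Fin n → ℝ) : l1 u - l1 v ≤ l1 (u - v) := by
  rw [l1, l1, l1, ← sum_sub_distrib]
  exact sum_le_sum fun i _ => abs_sub_abs_le_abs_sub (u i) (v i)

lemma l1_eq_l1_restr_add_l1_restr_compl (S : Finset (Fin n)) (v : Fin n → ℝ) :
    l1 v = l1 (restr S v) + l1 (restr Sᶜ v) := by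
  rw [l1, l1, l1, ← sum_add_distrib]
  refine sum_congr rfl fun i _ => ?_
  by_cases hi : i ∈ S <;> simp [restr, hi]

lemma l1_restr_compl_sub_l1_restr_sub_le (S : Finset (Fin n)) (x z : Fin n → ℝ) :
    l1 (restr Sᶜ z) - l1 (restr S z) - 2 * l1 (restr Sᶜ x) ≤ l1 (x + z) - l1 x := by
  rw [l1, l1, l1, l1, l1, mul_sum, ← sum_sub_distrib, ← sum_sub_distrib, ← sum_sub_distrib]
  refine sum_le_sum fun i _ => ?_
  have hS : |x i| ≤ |x i + z i| + |z i| := by simpa using abs_sub (x i + z i) (z i)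
  have hSc : |z i| ≤ |x i + z i| + |x i| := by simpa using abs_sub (x i + z i) (x i)
  by_cases hi : i ∈ S
  · simp only [restr, hi, mem_compl, not_true_eq_false, if_true, if_false, abs_zero,
      Pi.add_apply]
    linarith
  · simp only [restr, hi, mem_compl, not_false_eq_true, if_true, if_false, abs_zero,
      Pi.add_apply]
    linarith

end L1

theorem stmt8_general {N : ℕ} (x xh w : Fin N → ℝ)
    (T₀ : Finset (Fin N))
    (z : Fin N → ℝ) (hz : z = xh - x)
    (lam : ℝ) (hlam₁ : 1 / 2 < lam) (hlam₂ : lam ≤ 1)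
    (hopt : lam * l1 xh + (1 - lam) * l1 (xh - w) ≤ lam * l1 x + (1 - lam) * l1 (x - w)) :
    l1 (restr T₀ᶜ z) ≤ (1 / (2 * lam - 1)) * l1 (restr T₀ z)
      + (2 * lam / (2 * lam - 1)) * l1 (restr T₀ᶜ x) := by
  have hfidelity : l1 (x - w) - l1 (xh - w) ≤ l1 (restr T₀ z) + l1 (restr T₀ᶜ z) := by
    rw [← l1_eq_l1_restr_add_l1_restr_compl, hz, l1_sub_comm xh x, ← sub_sub_sub_cancel_right x xh w]
    exact l1_sub_l1_le _ _
  have hcone := l1_restr_compl_sub_l1_restr_sub_le T₀ x z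
  rw [show x + z = xh by rw [hz]; abel] at hcone
  have hkey : (2 * lam - 1) * l1 (restr T₀ᶜ z) ≤ l1 (restr T₀ z) + 2 * lam * l1 (restr T₀ᶜ x) := by
    linarith [mul_le_mul_of_nonneg_left hfidelity (by linarith : (0 : ℝ) ≤ 1 - lam),
      mul_le_mul_of_nonneg_left hcone (by linarith : (0 : ℝ) ≤ lam)]
  rw [show 1 / (2 * lam - 1) * l1 (restr T₀ z) + 2 * lam / (2 * lam - 1) * l1 (restr T₀ᶜ x)
      = (l1 (restr T₀ z) + 2 * lam * l1 (restr T₀ᶜ x)) / (2 * lam - 1) by ring,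
    le_div_iff₀ (by linarith)]
  linarith

/-- cone constraint for the ℓ1-penalty objective, λ > 1/2. -/
theorem stmt8 {N : ℕ} (x xh w : Fin N → ℝ) (s : ℕ)
    (T₀ : Finset (Fin N)) (hT₀ : T₀.card = s)
    (z : Fin N → ℝ) (hz : z = xh - x)
    (lam : ℝ) (hlam₁ : 1 / 2 < lam) (hlam₂ : lam ≤ 1)
    (hopt : lam * l1 xh + (1 - lam) * l1 (xh - w) ≤ lam * l1 x + (1 - lam) * l1 (x - w)) :
    l1 (restr T₀ᶜ z) ≤ (1 / (2 * lam - 1)) * l1 (restr T₀ z)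
      + (2 * lam / (2 * lam - 1)) * l1 (restr T₀ᶜ x) :=
  stmt8_general x xh w T₀ z hz lam hlam₁ hlam₂ hopt
end

section
/- Let x, x̂, w ∈ ℝ^N, T₀ a set of indices, z = x̂ - x, and suppose for some λ ∈ [0,1]: λ‖x̂‖₁ + (1-λ)‖x̂ - w‖₁ ≤ λ‖x‖₁ + (1-λ)‖x - w‖₁. Then ‖z_{T₀^c}‖₁ ≤ (2λ-1)‖z_{T₀}‖₁ + 2λ‖x_{T₀^c}‖₁ + 2(1-λ)‖x - w‖₁. -/
open Finset

/-!
Split every ℓ1 norm over `T₀` and `T₀ᶜ` and bound the left side of the optimality hypothesis from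
below by the triangle inequalities `‖x̂_{T₀}‖₁ ≥ ‖x_{T₀}‖₁ - ‖z_{T₀}‖₁`,
`‖x̂_{T₀ᶜ}‖₁ ≥ ‖z_{T₀ᶜ}‖₁ - ‖x_{T₀ᶜ}‖₁` (weight `λ ≥ 0`) and `‖x̂ - w‖₁ ≥ ‖z‖₁ - ‖x - w‖₁`
(weight `1 - λ ≥ 0`). The terms `λ ‖x_{T₀}‖₁` cancel, leaving the claimed inequality.
-/

section L1

variable {n : ℕ}

lemma l1_sub_le_add (a b : Fin n → ℝ) : l1 (a - b) ≤ l1 a + l1 b := by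
  simp only [l1, ← Finset.sum_add_distrib]
  exact Finset.sum_le_sum fun i _ => abs_sub _ _

lemma restr_sub (S : Finset (Fin n)) (a b : Fin n → ℝ) :
    restr S (a - b) = restr S a - restr S b := by
  funext i
  by_cases h : i ∈ S <;> simp [restr, h]

end L1

/-- cone-type inequality for any λ ∈ [0,1]. -/
theorem stmt9 {N : ℕ} (x xh w : Fin N → ℝ)
    (T₀ : Finset (Fin N))
    (z : Fin N → ℝ) (hz : z = xh - x)
    (lam : ℝ) (hlam₁ : 0 ≤ lam) (hlam₂ : lam ≤ 1)
    (hopt : lam * l1 xh + (1 - lam) * l1 (xh - w) ≤ lam * l1 x + (1 - lam) * l1 (x - w)) :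
    l1 (restr T₀ᶜ z) ≤ (2 * lam - 1) * l1 (restr T₀ z)
      + 2 * lam * l1 (restr T₀ᶜ x) + 2 * (1 - lam) * l1 (x - w) := by
  subst hz
  have hz_le : l1 (xh - x) ≤ l1 (xh - w) + l1 (x - w) := by
    simpa only [sub_sub_sub_cancel_right] using l1_sub_le_add (xh - w) (x - w)
  have hx_on : l1 (restr T₀ x) ≤ l1 (restr T₀ xh) + l1 (restr T₀ (xh - x)) := by
    simpa only [← restr_sub, sub_sub_cancel] using l1_sub_le_add (restr T₀ xh) (restr T₀ (xh - x))
  have hz_off : l1 (restr T₀ᶜ (xh - x)) ≤ l1 (restr T₀ᶜ xh) + l1 (restr T₀ᶜ x) := by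
    simpa only [← restr_sub] using l1_sub_le_add (restr T₀ᶜ xh) (restr T₀ᶜ x)
  rw [l1_eq_l1_restr_add_l1_restr_compl T₀ xh, l1_eq_l1_restr_add_l1_restr_compl T₀ x] at hopt
  rw [l1_eq_l1_restr_add_l1_restr_compl T₀ (xh - x)] at hz_le
  linarith [mul_le_mul_of_nonneg_left hz_le (sub_nonneg.mpr hlam₂),
    mul_le_mul_of_nonneg_left hx_on hlam₁, mul_le_mul_of_nonneg_left hz_off hlam₁]
end
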